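/- Let G be a modular noetherian right ℓ-group containing the strong order unit s with s^{-1} = ⋀ X(G⁻), the meet of all dual atoms of G⁻. Then an element g ∈ G⁻ is meet-irreducible in G⁻ if and only if g is 1-homogeneous, i.e., every factor of its right-normal factorization is a dual atom. -/

import Mathlib

/-- An element `s` of a right ℓ-group is normal if left multiplication by `s` preserves
the lattice operations. -/
def IsNormal {G : Type*} [Lattice G] [Group G] (s : G) : Prop :=
  ∀ x y : G, s * (x ⊓ y) = s * x ⊓ s * y ∧ s * (x ⊔ y) = s * x ⊔ s * y

/-- A strong order unit: a normal element `s > 1` such that every `g` satisfies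
`g ≤ sⁿ` for some integer `n`. -/
def IsStrongOrderUnit {G : Type*} [Lattice G] [Group G] (s : G) : Prop :=
  1 < s ∧ IsNormal s ∧ ∀ g : G, ∃ n : ℤ, g ≤ s ^ n

/-- A right ℓ-group is noetherian if every ascending chain bounded above and every
descending chain bounded below stabilizes. -/
def IsLatticeNoetherian (G : Type*) [Lattice G] : Prop :=
  (∀ f : ℕ → G, Monotone f → (∃ h : G, ∀ n, f n ≤ h) → ∃ N, ∀ m, N ≤ m → f m = f N) ∧
  (∀ f : ℕ → G, Antitone f → (∃ h : G, ∀ n, h ≤ f n) → ∃ N, ∀ m, N ≤ m → f m = f N)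

/-!
Write `t = s⁻¹`. A covering `a ⋖ b` means that `a * b⁻¹` is a dual atom, so `deg` drops by one
along coverings; by the chain conditions it is strictly antitone, and by modularity it is a
valuation, `deg (x ⊔ c) + deg (x ⊓ c) = deg x + deg c`. Both sides of the theorem are equivalent
to `deg g = k`.

The elements `g ⊔ tⁱ`, `i ≤ k`, strictly decrease from `1` to `g`, so the degrees of the
right-normal factors are `≥ 1` and sum to `deg g`: they all equal `1` iff `deg g = k`.

If `g = a ⊓ b` properly, two distinct covers `c₁, c₂` of `g` give `v = c₁ ⊔ c₂` of degree
`deg g - 2` with `t v ≤ c₁ ⊓ c₂ = g`; since `t ^ deg v ≤ v`, this puts `t ^ (deg g - 1)` below `g`,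
so `deg g > k`. Conversely, an irreducible `g ≠ 1` has a unique cover, which produces a dual atom
`f` with `f g ⊓ t = t g`; the valuation then makes `g ⊔ t` a dual atom, and `g (g ⊔ t)⁻¹` is
irreducible of index `k - 1`, so induction on `k` gives `deg g ≤ k`.
-/

namespace IsLatticeNoetherian

variable {G : Type*} [Lattice G]

theorem wellFoundedGT_Iic (hG : IsLatticeNoetherian G) (b : G) : WellFoundedGT (Set.Iic b) := by
  rw [wellFoundedGT_iff_monotone_chain_condition]
  intro f
  obtain ⟨N, hN⟩ := hG.1 (fun n ↦ f n) (fun _ _ h ↦ f.monotone h) ⟨b, fun n ↦ (f n).2⟩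
  exact ⟨N, fun m hm ↦ Subtype.ext (hN m hm).symm⟩

theorem wellFoundedLT_Ici (hG : IsLatticeNoetherian G) (a : G) : WellFoundedLT (Set.Ici a) := by
  rw [← wellFoundedGT_dual_iff, wellFoundedGT_iff_monotone_chain_condition]
  intro f
  obtain ⟨N, hN⟩ := hG.2 (fun n ↦ (OrderDual.ofDual (f n) : Set.Ici a))
    (fun _ _ h ↦ f.monotone h) ⟨a, fun n ↦ (OrderDual.ofDual (f n)).2⟩
  exact ⟨N, fun m hm ↦ congrArg OrderDual.toDual (Subtype.ext (hN m hm).symm)⟩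

theorem isStronglyAtomic (hG : IsLatticeNoetherian G) : IsStronglyAtomic G where
  exists_covBy_le_of_lt a b hab := by
    have := hG.wellFoundedLT_Ici a
    obtain ⟨⟨x, hax⟩, hx, hxb⟩ :=
      exists_covBy_le_of_lt (show (⟨a, le_rfl⟩ : Set.Ici a) < ⟨b, hab.le⟩ from hab)
    refine ⟨x, ?_, hxb⟩
    exact (Set.OrdConnected.apply_covBy_apply_iff (OrderEmbedding.subtype _)
      (by rw [OrderEmbedding.coe_subtype, Subtype.range_coe]; exact Set.ordConnected_Ici)).2 hx

theorem isStronglyCoatomic (hG : IsLatticeNoetherian G) : IsStronglyCoatomic G where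
  exists_le_covBy_of_lt a b hab := by
    have := hG.wellFoundedGT_Iic b
    obtain ⟨⟨x, hxb⟩, hax, hx⟩ :=
      exists_le_covBy_of_lt (show (⟨a, hab.le⟩ : Set.Iic b) < ⟨b, le_rfl⟩ from hab)
    exact ⟨x, hax, (Set.OrdConnected.apply_covBy_apply_iff (OrderEmbedding.subtype _)
      (by rw [OrderEmbedding.coe_subtype, Subtype.range_coe]; exact Set.ordConnected_Iic)).2 hx⟩

theorem decreasing_induction (hG : IsLatticeNoetherian G) {b : G} {P : G → Prop} (top : P b)
    (step : ∀ x y, x ⋖ y → y ≤ b → P y → P x) : ∀ x ≤ b, P x := by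
  have := hG.wellFoundedGT_Iic b
  have := hG.isStronglyAtomic
  suffices ∀ x : Set.Iic b, P x from fun x hx ↦ this ⟨x, hx⟩
  intro x
  induction x using WellFoundedGT.induction with
  | _ x ih =>
    obtain hxb | hxb := x.2.lt_or_eq
    · obtain ⟨y, hxy, hyb⟩ := exists_covBy_le_of_lt hxb
      exact step x y hxy hyb (ih ⟨y, hyb⟩ hxy.lt)
    · rw [hxb]; exact top

theorem le_induction (hG : IsLatticeNoetherian G) {a : G} {P : G → Prop} (base : P a)
    (step : ∀ x y, x ⋖ y → a ≤ x → P x → P y) : ∀ y, a ≤ y → P y := by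
  have := hG.wellFoundedLT_Ici a
  have := hG.isStronglyCoatomic
  suffices ∀ y : Set.Ici a, P y from fun y hy ↦ this ⟨y, hy⟩
  intro y
  induction y using WellFoundedLT.induction with
  | _ y ih =>
    obtain hay | hay := y.2.lt_or_eq
    · obtain ⟨x, hax, hxy⟩ := exists_le_covBy_of_lt hay
      exact step x y hxy hax (ih ⟨x, hax⟩ hxy.lt)
    · rw [← hay]; exact base

end IsLatticeNoetherian

theorem isNormal_one {G : Type*} [Lattice G] [Group G] : IsNormal (1 : G) := fun x y ↦ by simp

namespace IsNormal

variable {G : Type*} [Lattice G] [Group G] {t u : G}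

theorem mul_le_mul_iff_left (ht : IsNormal t) {x y : G} : t * x ≤ t * y ↔ x ≤ y := by
  constructor
  · intro h
    have hinf := (ht x y).1
    rw [inf_eq_left.2 h, mul_right_inj] at hinf
    exact inf_eq_left.1 hinf
  · intro h
    have hsup := (ht x y).2
    rw [sup_eq_right.2 h] at hsup
    exact hsup ▸ le_sup_left

theorem mul_lt_mul_iff_left (ht : IsNormal t) {x y : G} : t * x < t * y ↔ x < y := by
  simp only [lt_iff_le_not_ge, ht.mul_le_mul_iff_left]

theorem mul (ht : IsNormal t) (hu : IsNormal u) : IsNormal (t * u) := fun x y ↦ by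
  simp only [mul_assoc, (hu x y).1, (hu x y).2, (ht _ _).1, (ht _ _).2, and_self]

theorem pow (ht : IsNormal t) : ∀ n : ℕ, IsNormal (t ^ n)
  | 0 => by simpa using isNormal_one
  | n + 1 => by rw [pow_succ]; exact (ht.pow n).mul ht

theorem inv (ht : IsNormal t) : IsNormal t⁻¹ := fun x y ↦ by
  constructor <;> refine mul_left_cancel (a := t) ?_ <;> simp [(ht _ _).1, (ht _ _).2]

end IsNormal

section RightOrdered

variable {G : Type*} [Lattice G] [Group G] [MulRightMono G] {a b t : G}

theorem CovBy.mul_inv_covBy_one (h : a ⋖ b) : a * b⁻¹ ⋖ 1 := by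
  simpa using (apply_covBy_apply_iff (OrderIso.mulRight b⁻¹)).2 h

theorem CovBy.mul_le_of_isGLB (hglb : IsGLB {x : G | x ⋖ 1} t) (h : a ⋖ b) : t * b ≤ a :=
  le_mul_inv_iff_mul_le.1 (hglb.1 h.mul_inv_covBy_one)

end RightOrdered

theorem CovBy.sup_covBy_sup_of_inf_le {α : Type*} [Lattice α] [IsModularLattice α] {a b c : α}
    (h : a ⋖ b) (hc : b ⊓ c ≤ a) : a ⊔ c ⋖ b ⊔ c := by
  have hinf : b ⊓ (a ⊔ c) = a := by
    rw [inf_comm, sup_inf_assoc_of_le c h.le, inf_comm c b, sup_eq_left.2 hc]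
  have := covBy_sup_of_inf_covBy_left (a := b) (b := a ⊔ c) (by rwa [hinf])
  rwa [← sup_assoc, sup_eq_left.2 h.le] at this

structure IsDegree {G : Type*} [Lattice G] [Group G] (deg : G → ℤ) : Prop where
  map_mul : ∀ a b, deg (a * b) = deg a + deg b
  eq_one_of_covBy_one : ∀ x, x ⋖ 1 → deg x = 1

namespace IsDegree

section

variable {G : Type*} [Lattice G] [Group G] {deg : G → ℤ}

theorem map_one (hd : IsDegree deg) : deg 1 = 0 := by
  simpa using hd.map_mul 1 1

theorem map_mul_inv (hd : IsDegree deg) (a b : G) : deg (a * b⁻¹) = deg a - deg b := by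
  have := hd.map_mul (a * b⁻¹) b
  rw [inv_mul_cancel_right] at this
  omega

end

variable {G : Type*} [Lattice G] [Group G] [MulRightMono G] {deg : G → ℤ} {a b t : G}

theorem eq_add_one_of_covBy (hd : IsDegree deg) (h : a ⋖ b) : deg a = deg b + 1 := by
  have := hd.eq_one_of_covBy_one _ h.mul_inv_covBy_one
  rw [hd.map_mul_inv] at this
  omega

theorem strictAnti (hd : IsDegree deg) (hG : IsLatticeNoetherian G) : StrictAnti deg := by
  intro a b hab
  refine hG.decreasing_induction (P := fun x ↦ x < b → deg b < deg x)
    (fun h ↦ absurd h (lt_irrefl b)) ?_ a hab.le hab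
  intro x y hxy hyb hy _
  rw [hd.eq_add_one_of_covBy hxy]
  rcases hyb.lt_or_eq with hyb | rfl
  · linarith [hy hyb]
  · omega

theorem covBy_of_eq_add_one (hd : IsDegree deg) (hG : IsLatticeNoetherian G) (hab : a ≤ b)
    (h : deg a = deg b + 1) : a ⋖ b := by
  refine ⟨hab.lt_of_ne (by rintro rfl; omega), fun c hac hcb ↦ ?_⟩
  have := hd.strictAnti hG hac
  have := hd.strictAnti hG hcb
  omega

theorem sup_add_inf [IsModularLattice G] (hd : IsDegree deg) (hG : IsLatticeNoetherian G)
    (x c : G) : deg (x ⊔ c) + deg (x ⊓ c) = deg x + deg c := by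
  suffices ∀ y, x ⊓ c ≤ y → y ≤ x → deg (y ⊔ c) + deg (x ⊓ c) = deg y + deg c from
    this x inf_le_left le_rfl
  refine hG.le_induction (fun _ ↦ by rw [sup_eq_right.2 inf_le_right, add_comm]) ?_
  intro y y' hyy' hy ih hy'x
  have hcov := hyy'.sup_covBy_sup_of_inf_le ((inf_le_inf_right c hy'x).trans hy)
  linarith [ih (hyy'.le.trans hy'x), hd.eq_add_one_of_covBy hyy', hd.eq_add_one_of_covBy hcov]

theorem zpow_deg_le (hd : IsDegree deg) (hG : IsLatticeNoetherian G)
    (hglb : IsGLB {x : G | x ⋖ 1} t) (htn : IsNormal t) : ∀ x ≤ 1, t ^ deg x ≤ x := by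
  refine hG.decreasing_induction (by rw [hd.map_one, zpow_zero]) fun x y hxy _ hy ↦ ?_
  rw [hd.eq_add_one_of_covBy hxy, add_comm, zpow_one_add]
  exact (htn.mul_le_mul_iff_left.2 hy).trans (hxy.mul_le_of_isGLB hglb)

theorem index_le_deg (hd : IsDegree deg) (hG : IsLatticeNoetherian G)
    (hglb : IsGLB {x : G | x ⋖ 1} t) (htn : IsNormal t) {g : G} {k : ℕ} (hg : g ≤ 1)
    (hkmin : ∀ j < k, ¬ t ^ j ≤ g) : (k : ℤ) ≤ deg g := by
  have h0 : 0 ≤ deg g := hd.map_one ▸ (hd.strictAnti hG).antitone hg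
  by_contra! hlt
  apply hkmin (deg g).toNat (by omega)
  rw [← zpow_natCast, Int.toNat_of_nonneg h0]
  exact hd.zpow_deg_le hG hglb htn g hg

end IsDegree

section Powers

variable {G : Type*} [Lattice G] [Group G] [MulRightMono G] {t g : G}

theorem sup_pow_succ (ht1 : t ≤ 1) (htn : IsNormal t) (g : G) (n : ℕ) :
    g ⊔ t ^ (n + 1) = g ⊔ t * (g ⊔ t ^ n) := by
  rw [(htn g _).2, ← sup_assoc, sup_eq_left.2 (mul_le_of_le_one_left' ht1), pow_succ']

theorem sup_pow_eq_of_succ_eq (ht1 : t ≤ 1) (htn : IsNormal t) {i : ℕ}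
    (h : g ⊔ t ^ (i + 1) = g ⊔ t ^ i) : ∀ j, i ≤ j → g ⊔ t ^ j = g ⊔ t ^ i := by
  intro j hij
  induction j, hij using Nat.le_induction with
  | base => rfl
  | succ j _ ih => rw [sup_pow_succ ht1 htn, ih, ← sup_pow_succ ht1 htn, h]

theorem sup_pow_succ_lt (ht1 : t ≤ 1) (htn : IsNormal t) {k i : ℕ} (hk : t ^ k ≤ g)
    (hkmin : ∀ j < k, ¬ t ^ j ≤ g) (hi : i < k) : g ⊔ t ^ (i + 1) < g ⊔ t ^ i := by
  refine (sup_le_sup_left ?_ g).lt_of_ne fun h ↦ hkmin i hi ?_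
  · rw [pow_succ']
    exact mul_le_of_le_one_left' ht1
  · have := sup_pow_eq_of_succ_eq ht1 htn h k hi.le
    rw [sup_eq_left.2 hk] at this
    exact this ▸ le_sup_right

theorem eq_one_of_sup_eq_one (ht1 : t ≤ 1) (htn : IsNormal t) {k : ℕ} (hg : g ≤ 1)
    (hk : t ^ k ≤ g) (h : g ⊔ t = 1) : g = 1 := by
  have := sup_pow_eq_of_succ_eq ht1 htn (i := 0)
    (by rwa [zero_add, pow_one, pow_zero, sup_eq_right.2 hg]) k k.zero_le
  rwa [sup_eq_left.2 hk, pow_zero, sup_eq_right.2 hg] at this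

end Powers

def IsNegConeMeetIrreducible {G : Type*} [Lattice G] [One G] (g : G) : Prop :=
  ∀ a b : G, a ≤ 1 → b ≤ 1 → g = a ⊓ b → g = a ∨ g = b

namespace IsNegConeMeetIrreducible

section

variable {G : Type*} [Lattice G] [One G] {g : G}

theorem exists_lt_forall_le (hirr : IsNegConeMeetIrreducible g) (hG : IsLatticeNoetherian G)
    (hg : g < 1) : ∃ c, g < c ∧ ∀ z, g < z → z ≤ 1 → c ≤ z := by
  have := hG.isStronglyAtomic
  obtain ⟨c, hgc, hc1⟩ := exists_covBy_le_of_lt hg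
  refine ⟨c, hgc.lt, fun z hgz hz1 ↦ ?_⟩
  obtain ⟨c', hgc', hc'z⟩ := exists_covBy_le_of_lt hgz
  obtain rfl | hne := eq_or_ne c' c
  · exact hc'z
  · have := hirr c' c (hc'z.trans hz1) hc1 (hgc'.wcovBy.inf_eq hgc.wcovBy hne).symm
    exact (this.elim hgc'.lt.ne hgc.lt.ne).elim

end

variable {G : Type*} [Lattice G] [Group G] [MulRightMono G] {deg : G → ℤ} {g t : G}

theorem mul_inv (hirr : IsNegConeMeetIrreducible g) {h : G} (hh : h ≤ 1) :
    IsNegConeMeetIrreducible (g * h⁻¹) := by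
  intro a b ha hb hab
  have hab' : g = a * h ⊓ b * h := by rw [← inf_mul, ← hab, inv_mul_cancel_right]
  have hle : ∀ {x : G}, x ≤ 1 → x * h ≤ 1 := fun hx ↦
    ((mul_le_mul_left hx h).trans_eq (one_mul h)).trans hh
  refine (hirr _ _ (hle ha) (hle hb) hab').imp ?_ ?_ <;> intro h' <;> rw [h', mul_inv_cancel_right]

theorem exists_covBy_one_mul_inf_eq (hirr : IsNegConeMeetIrreducible g)
    (hG : IsLatticeNoetherian G) (hglb : IsGLB {x : G | x ⋖ 1} t) (htn : IsNormal t)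
    (hg : g < 1) : ∃ f, f ⋖ 1 ∧ f * g ⊓ t = t * g := by
  obtain ⟨c, hgc, hc⟩ := hirr.exists_lt_forall_le hG hg
  by_contra! hf
  -- Otherwise `t * c * g⁻¹` lies below every dual atom, hence below `t`, which forces `c ≤ g`.
  have hlb : t * c * g⁻¹ ∈ lowerBounds {x : G | x ⋖ 1} := by
    intro f (hf1 : f ⋖ 1)
    have hlt : t * g < f * g ⊓ t :=
      (le_inf (mul_le_mul_left (hglb.1 hf1) g)
        (by simpa using htn.mul_le_mul_iff_left.2 hg.le)).lt_of_ne (hf f hf1).symm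
    have htc : t * c ≤ f * g ⊓ t := by
      rw [← mul_inv_cancel_left t (f * g ⊓ t), htn.mul_le_mul_iff_left]
      refine hc _ ?_ ?_
      · rwa [← htn.mul_lt_mul_iff_left, mul_inv_cancel_left]
      · rw [← htn.mul_le_mul_iff_left, mul_inv_cancel_left, mul_one]
        exact inf_le_right
    exact mul_inv_le_iff_le_mul.2 (htc.trans inf_le_left)
  exact hgc.not_ge (htn.mul_le_mul_iff_left.1 (mul_inv_le_iff_le_mul.1 (hglb.2 hlb)))

theorem sup_covBy_one [IsModularLattice G] (hirr : IsNegConeMeetIrreducible g)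
    (hd : IsDegree deg) (hG : IsLatticeNoetherian G) (hglb : IsGLB {x : G | x ⋖ 1} t)
    (ht1 : t ≤ 1) (htn : IsNormal t) (hg : g ≤ 1) (hgt : g ⊔ t ≠ 1) : g ⊔ t ⋖ 1 := by
  have hg1 : g < 1 := hg.lt_of_ne (by rintro rfl; exact hgt (sup_eq_left.2 ht1))
  obtain ⟨f, hf, hfg⟩ := hirr.exists_covBy_one_mul_inf_eq hG hglb htn hg1
  have hfg1 : f * g ≤ g := mul_le_of_le_one_left' hf.le
  have hcov : f * g ⊔ t ⋖ 1 := by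
    refine hd.covBy_of_eq_add_one hG (sup_le (hfg1.trans hg) ht1) ?_
    have := hd.sup_add_inf hG (f * g) t
    rw [hfg, hd.map_mul, hd.map_mul, hd.eq_one_of_covBy_one f hf] at this
    rw [hd.map_one]
    linarith
  obtain h | h := hcov.eq_or_eq (sup_le_sup_right hfg1 t) (sup_le hg ht1)
  · exact h ▸ hcov
  · exact absurd h hgt

theorem deg_le [IsModularLattice G] (hirr : IsNegConeMeetIrreducible g) (hd : IsDegree deg)
    (hG : IsLatticeNoetherian G) (hglb : IsGLB {x : G | x ⋖ 1} t) (ht1 : t ≤ 1)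
    (htn : IsNormal t) {k : ℕ} (hg : g ≤ 1) (hk : t ^ k ≤ g) : deg g ≤ k := by
  induction k generalizing g with
  | zero =>
    rw [le_antisymm hg (by simpa using hk), hd.map_one]
    simp
  | succ k ih =>
    obtain rfl | hg1 := eq_or_ne g 1
    · rw [hd.map_one]
      omega
    have hcov := hirr.sup_covBy_one hd hG hglb ht1 htn hg
      fun h ↦ hg1 (eq_one_of_sup_eq_one ht1 htn hg hk h)
    have hk' : t ^ k ≤ g * (g ⊔ t)⁻¹ := by
      rw [le_mul_inv_iff_mul_le, ((htn.pow k) g t).2, ← pow_succ]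
      exact sup_le (mul_le_of_le_one_left' (Right.pow_le_one_of_le ht1)) hk
    have := ih (hirr.mul_inv (sup_le hg ht1)) (mul_inv_le_one_iff_le.2 le_sup_left) hk'
    rw [hd.map_mul_inv, hd.eq_one_of_covBy_one _ hcov] at this
    push_cast
    linarith

end IsNegConeMeetIrreducible

-- `rightNormalFactor t g i` is the paper's factor `g_{i+1}` when `t = s⁻¹`.
def rightNormalFactor {G : Type*} [Lattice G] [Group G] (t g : G) (i : ℕ) : G :=
  (g ⊔ t ^ (i + 1)) * (g ⊔ t ^ i)⁻¹

section Index

variable {G : Type*} [Lattice G] [Group G] [MulRightMono G] {deg : G → ℤ} {g t : G} {k : ℕ}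

theorem isNegConeMeetIrreducible_of_deg_eq [IsModularLattice G] (hd : IsDegree deg)
    (hG : IsLatticeNoetherian G) (hglb : IsGLB {x : G | x ⋖ 1} t) (htn : IsNormal t)
    (hkmin : ∀ j < k, ¬ t ^ j ≤ g) (hdeg : deg g = k) : IsNegConeMeetIrreducible g := by
  intro a b ha hb hab
  by_contra! hne
  have := hG.isStronglyAtomic
  obtain ⟨c₁, hgc₁, hc₁a⟩ := exists_covBy_le_of_lt ((hab ▸ inf_le_left : g ≤ a).lt_of_ne hne.1)
  obtain ⟨c₂, hgc₂, hc₂b⟩ := exists_covBy_le_of_lt ((hab ▸ inf_le_right : g ≤ b).lt_of_ne hne.2)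
  have hinf : c₁ ⊓ c₂ = g := hgc₁.wcovBy.inf_eq hgc₂.wcovBy fun h ↦
    hgc₁.lt.not_ge (hab ▸ le_inf hc₁a (h ▸ hc₂b))
  have hv1 : c₁ ⊔ c₂ ≤ 1 := sup_le (hc₁a.trans ha) (hc₂b.trans hb)
  have hv0 : 0 ≤ deg (c₁ ⊔ c₂) := hd.map_one ▸ (hd.strictAnti hG).antitone hv1
  have hv : deg (c₁ ⊔ c₂) + 2 = deg g := by
    have := hd.sup_add_inf hG c₁ c₂
    rw [hinf] at this
    linarith [hd.eq_add_one_of_covBy hgc₁, hd.eq_add_one_of_covBy hgc₂]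
  have htv : t * (c₁ ⊔ c₂) ≤ g := hinf ▸ le_inf
    ((covBy_sup_of_inf_covBy_right (by rwa [hinf])).mul_le_of_isGLB hglb)
    ((covBy_sup_of_inf_covBy_left (by rwa [hinf])).mul_le_of_isGLB hglb)
  apply hkmin (k - 1) (by omega)
  rw [← zpow_natCast, show ((k - 1 : ℕ) : ℤ) = 1 + deg (c₁ ⊔ c₂) by omega, zpow_one_add]
  exact (htn.mul_le_mul_iff_left.2 (hd.zpow_deg_le hG hglb htn _ hv1)).trans htv

theorem isNegConeMeetIrreducible_iff_deg_eq [IsModularLattice G] (hd : IsDegree deg)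
    (hG : IsLatticeNoetherian G) (hglb : IsGLB {x : G | x ⋖ 1} t) (ht1 : t ≤ 1)
    (htn : IsNormal t) (hg : g ≤ 1) (hk : t ^ k ≤ g) (hkmin : ∀ j < k, ¬ t ^ j ≤ g) :
    IsNegConeMeetIrreducible g ↔ deg g = k :=
  ⟨fun hirr ↦ le_antisymm (hirr.deg_le hd hG hglb ht1 htn hg hk)
      (hd.index_le_deg hG hglb htn hg hkmin),
    isNegConeMeetIrreducible_of_deg_eq hd hG hglb htn hkmin⟩

theorem forall_deg_rightNormalFactor_eq_one_iff (hd : IsDegree deg) (hG : IsLatticeNoetherian G)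
    (ht1 : t ≤ 1) (htn : IsNormal t) (hg : g ≤ 1) (hk : t ^ k ≤ g)
    (hkmin : ∀ j < k, ¬ t ^ j ≤ g) :
    (∀ i < k, deg (rightNormalFactor t g i) = 1) ↔ deg g = k := by
  simp only [rightNormalFactor, hd.map_mul_inv]
  have hstep : ∀ i ∈ Finset.range k, 1 ≤ deg (g ⊔ t ^ (i + 1)) - deg (g ⊔ t ^ i) :=
    fun i hi ↦ by
      have := hd.strictAnti hG (sup_pow_succ_lt ht1 htn hk hkmin (Finset.mem_range.1 hi))
      omega
  have hsum : ∑ i ∈ Finset.range k, (deg (g ⊔ t ^ (i + 1)) - deg (g ⊔ t ^ i)) = deg g := by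
    rw [Finset.sum_range_sub (fun i ↦ deg (g ⊔ t ^ i)), sup_eq_left.2 hk, pow_zero,
      sup_eq_right.2 hg, hd.map_one, sub_zero]
  calc (∀ i < k, deg (g ⊔ t ^ (i + 1)) - deg (g ⊔ t ^ i) = 1)
      ↔ ∀ i ∈ Finset.range k, 1 = deg (g ⊔ t ^ (i + 1)) - deg (g ⊔ t ^ i) := by
        simp only [Finset.mem_range, eq_comm]
    _ ↔ ∑ _i ∈ Finset.range k, 1 = deg g := by rw [← hsum, Finset.sum_eq_sum_iff_of_le hstep]
    _ ↔ deg g = k := by simp [eq_comm]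

end Index

/-- In a modular noetherian right ℓ-group with `s⁻¹ = ⋀ X(G⁻)` a strong order unit,
`g ≤ 1` is meet-irreducible in the negative cone iff it is 1-homogeneous, i.e. each
right-normal factor `g_i = (g ⊔ s^{-i})(g ⊔ s^{-(i-1)})⁻¹` has degree 1. -/
theorem meet_irreducibles_are_1_homogeneous {G : Type*} [Lattice G] [Group G]
    [CovariantClass G G (Function.swap (· * ·)) (· ≤ ·)] [IsModularLattice G]
    (hG : IsLatticeNoetherian G) (s : G)
    (hglb : IsGLB {x : G | x ⋖ 1} s⁻¹) (hs : IsStrongOrderUnit s)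
    (deg : G → ℤ) (hdeg : ∀ a b : G, deg (a * b) = deg a + deg b)
    (hatom : ∀ x : G, x ⋖ 1 → deg x = 1)
    (g : G) (hg : g ≤ 1)
    (k : ℕ) (hk : s ^ (-(k : ℤ)) ≤ g) (hkmin : ∀ j : ℕ, j < k → ¬ s ^ (-(j : ℤ)) ≤ g) :
    (∀ a b : G, a ≤ 1 → b ≤ 1 → g = a ⊓ b → g = a ∨ g = b) ↔
      (∀ i : ℕ, 1 ≤ i → i ≤ k →
        deg ((g ⊔ s ^ (-(i : ℤ))) * (g ⊔ s ^ (-(i : ℤ) + 1))⁻¹) = 1) := by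
  obtain ⟨hs1, hsn, -⟩ := hs
  have hd : IsDegree deg := ⟨hdeg, hatom⟩
  have ht1 : s⁻¹ ≤ 1 := Right.inv_le_one_iff.2 hs1.le
  have hpow (n : ℕ) : s ^ (-(n : ℤ)) = s⁻¹ ^ n := by rw [zpow_neg, zpow_natCast, inv_pow]
  have hpow_succ (i : ℕ) : s ^ (-((i + 1 : ℕ) : ℤ) + 1) = s⁻¹ ^ i := by
    rw [← hpow]; congr 1; push_cast; ring
  simp only [hpow] at hk hkmin
  have hreindex : (∀ i : ℕ, 1 ≤ i → i ≤ k →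
        deg ((g ⊔ s ^ (-(i : ℤ))) * (g ⊔ s ^ (-(i : ℤ) + 1))⁻¹) = 1) ↔
      ∀ i < k, deg (rightNormalFactor s⁻¹ g i) = 1 := by
    refine ⟨fun h i hi ↦ ?_, fun h i hi hik ↦ ?_⟩
    · simpa only [rightNormalFactor, hpow, hpow_succ] using h (i + 1) (by omega) hi
    · obtain ⟨i, rfl⟩ := Nat.exists_eq_add_of_le' hi
      simpa only [rightNormalFactor, hpow, hpow_succ] using h i hik
  show IsNegConeMeetIrreducible g ↔ _
  rw [hreindex, isNegConeMeetIrreducible_iff_deg_eq hd hG hglb ht1 hsn.inv hg hk hkmin,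
    forall_deg_rightNormalFactor_eq_one_iff hd hG ht1 hsn.inv hg hk hkmin]
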